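/- arXiv:1111.5198 — 9 statements merged into one kernel-verified Lean document; each statement's English description precedes it below -/
import Mathlib

section
/- Let f, h : ℝ → ℝ be smooth with f nowhere zero, n ≠ 0, and α ∈ ℝ with h = α • f. Define T : ℝ → ℝ by T(t) = (e^{α n t} - 1)/(α n) if α ≠ 0 and T(t) = t if α = 0. If u : ℝ × ℝ → ℝ is a smooth solution of f(x) u_t = ∂_x(e^{n u} u_x) + α f(x), then the function u'(t', x) := u(t, x) - α t, expressed in the new time variable t' = T(t), i.e. u'(T(t), x) = u(t,x) - α t, is a solution of f(x) u'_{t'} = ∂_x(e^{n u'} u'_x). -/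
/-- the additional equivalence transformation
t' = (e^{αnt}-1)/(αn) (t' = t if α = 0), u' = u - αt maps solutions of
f u_t = (e^{nu} u_x)_x + α f to solutions of f u'_{t'} = (e^{nu'} u'_{x})_x. -/
theorem stmt0 (f h : ℝ → ℝ) (hf : ContDiff ℝ (⊤ : ℕ∞) f) (hhs : ContDiff ℝ (⊤ : ℕ∞) h)
    (hfz : ∀ x, f x ≠ 0) (n : ℝ) (hn : n ≠ 0) (α : ℝ) (hhf : ∀ x, h x = α * f x)
    (T : ℝ → ℝ)
    (hT : ∀ t, T t = if α = 0 then t else (Real.exp (α * n * t) - 1) / (α * n))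
    (u : ℝ → ℝ → ℝ) (hu : ContDiff ℝ (⊤ : ℕ∞) (Function.uncurry u))
    (hpde : ∀ t x, f x * deriv (fun s => u s x) t =
      deriv (fun y => Real.exp (n * u t y) * deriv (fun z => u t z) y) x + α * f x)
    (v : ℝ → ℝ → ℝ) (hv : ∀ t x, v (T t) x = u t x - α * t) :
    ∀ t x, f x * deriv (fun s => v s x) (T t) =
      deriv (fun y => Real.exp (n * v (T t) y) * deriv (fun z => v (T t) z) y) x := by
  intro t x
  by_cases hα : α = 0
  · subst hα
    have hT' : ∀ s, T s = s := fun s => by rw [hT]; simp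
    have hv' : ∀ s y, v s y = u s y := fun s y => by
      have := hv s y; rw [hT'] at this; simpa using this
    simp only [hT', hv']
    simpa using hpde t x
  · set c : ℝ := α * n with hcdef
    have hc : c ≠ 0 := mul_ne_zero hα hn
    have hTt : T t = (Real.exp (c * t) - 1) / c := by rw [hT]; simp [hα]
    have hcT : c * T t + 1 = Real.exp (c * t) := by
      rw [hTt]; field_simp; ring
    set S : ℝ → ℝ := fun s => Real.log (c * s + 1) / c with hSdef
    have hSt : S (T t) = t := by
      simp only [hSdef, hcT, Real.log_exp]
      field_simp
    -- differentiability of u in time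
    have hux : DifferentiableAt ℝ (fun s => u s x) t := by
      have h1 : DifferentiableAt ℝ (Function.uncurry u) (t, x) :=
        (hu.differentiable (by simp)) (t, x)
      exact h1.comp (f := fun s : ℝ => (s, x)) t (DifferentiableAt.prodMk differentiableAt_id (differentiableAt_const x))
    have hdu : HasDerivAt (fun s => u s x) (deriv (fun s => u s x) t) t :=
      hux.hasDerivAt
    -- v near T t agrees with s ↦ u (S s) x - α * S s
    have hopen : ∀ᶠ s in nhds (T t), (fun s => v s x) s = u (S s) x - α * S s := by
      have hmem : {s : ℝ | 0 < c * s + 1} ∈ nhds (T t) := by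
        have : IsOpen {s : ℝ | 0 < c * s + 1} :=
          isOpen_lt continuous_const (by continuity)
        exact this.mem_nhds (by simp only [Set.mem_setOf_eq, hcT]; positivity)
      filter_upwards [hmem] with s hs
      have hTS : T (S s) = s := by
        rw [hT]; simp only [hα, if_false]
        have : c * S s = Real.log (c * s + 1) := by
          simp only [hSdef]; field_simp
        rw [this, Real.exp_log hs]
        field_simp; ring
      have := hv (S s) x
      rw [hTS] at this
      rw [this]
    -- derivative of S at T t
    have hdS : HasDerivAt S (Real.exp (-(c * t))) (T t) := by
      have h1 : HasDerivAt (fun s : ℝ => c * s + 1) c (T t) := by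
        simpa using ((hasDerivAt_id (T t)).const_mul c).add_const 1
      have h2 : HasDerivAt (fun s => Real.log (c * s + 1)) (c / (c * T t + 1)) (T t) :=
        h1.log (by rw [hcT]; exact (Real.exp_pos _).ne')
      have h3 := h2.div_const c
      refine h3.congr_deriv ?_
      rw [hcT, Real.exp_neg]
      field_simp
    -- derivative of the transported function
    have hdu' : HasDerivAt (fun s => u s x) (deriv (fun s => u s x) t) (S (T t)) := by
      rw [hSt]; exact hdu
    have hdg : HasDerivAt (fun s => u (S s) x - α * S s)
        ((deriv (fun s => u s x) t - α) * Real.exp (-(c * t))) (T t) := by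
      have hcomp := hdu'.comp (T t) hdS
      have hsub := hcomp.sub (hdS.const_mul α)
      refine hsub.congr_deriv ?_
      ring
    have hvd : deriv (fun s => v s x) (T t)
        = (deriv (fun s => u s x) t - α) * Real.exp (-(c * t)) := by
      rw [Filter.EventuallyEq.deriv_eq hopen]
      exact hdg.deriv
    -- right-hand side rewriting
    have hR : (fun y => Real.exp (n * v (T t) y) * deriv (fun z => v (T t) z) y)
        = fun y => Real.exp (-(c * t)) *
            (Real.exp (n * u t y) * deriv (fun z => u t z) y) := by
      funext y
      have h1 : v (T t) y = u t y - α * t := hv t y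
      have h2 : (fun z => v (T t) z) = fun z => u t z - α * t :=
        funext fun z => hv t z
      rw [h1, h2, deriv_sub_const]
      rw [show n * (u t y - α * t) = -(c * t) + n * u t y by ring, Real.exp_add]
      ring
    rw [hvd, hR, deriv_const_mul_field]
    have hp := hpde t x
    have hpd : deriv (fun y => Real.exp (n * u t y) * deriv (fun z => u t z) y) x
        = f x * deriv (fun s => u s x) t - α * f x := by linarith
    rw [hpd]; ring
end

section
/- Fix n ≠ 0 and constants α, C ∈ ℝ with C - (αn + 2) t > 0 and x > 0 on an open set Ω ⊆ ℝ × ℝ. Then u(t, x) := (1/n) · log( x² / (C - (αn + 2) t) ) is a solution on Ω of the PDE u_t = (e^{n u} u_x)_x + α x^{-2} e^{n u}. -/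
/-!
Along each line `t = const`, `e^{n u} = x² / D` with `D = C - (α n + 2) t`, while `u_x = 2 / (n x)`,
so the flux `e^{n u} u_x = 2 x / (n D)` is linear in `x` and `(e^{n u} u_x)_x = 2 / (n D)`.
The reaction term contributes `α / D`, and together they give `(α n + 2) / (n D) = u_t`.
-/

open Real

theorem exp_mul_one_div_mul_log {n a : ℝ} (hn : n ≠ 0) (ha : 0 < a) :
    exp (n * (1 / n * log a)) = a := by
  rw [← mul_assoc, mul_one_div_cancel hn, one_mul, exp_log ha]

theorem hasDerivAt_one_div_mul_log_div_affine {n A C k t : ℝ} (hA : A ≠ 0)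
    (ht : C - k * t ≠ 0) :
    HasDerivAt (fun s => 1 / n * log (A / (C - k * s))) (k / (n * (C - k * t))) t := by
  have hden : HasDerivAt (fun s => C - k * s) (-k) t := by
    simpa using ((hasDerivAt_id t).const_mul k).const_sub C
  have hlog := ((hasDerivAt_const t A).fun_div hden ht).log (div_ne_zero hA ht)
  refine (hlog.const_mul (1 / n)).congr_deriv ?_
  field_simp
  ring

theorem hasDerivAt_one_div_mul_log_sq_div {n D x : ℝ} (hD : D ≠ 0) (hx : x ≠ 0) :
    HasDerivAt (fun y => 1 / n * log (y ^ 2 / D)) (2 / (n * x)) x := by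
  have hlog := ((hasDerivAt_pow 2 x).div_const D).log (div_ne_zero (pow_ne_zero 2 hx) hD)
  refine (hlog.const_mul (1 / n)).congr_deriv ?_
  field_simp
  ring

theorem hasDerivAt_exp_mul_deriv_one_div_mul_log_sq_div {n D x : ℝ} (hn : n ≠ 0)
    (hD : 0 < D) (hx : x ≠ 0) :
    HasDerivAt
      (fun y => exp (n * (1 / n * log (y ^ 2 / D))) * deriv (fun z => 1 / n * log (z ^ 2 / D)) y)
      (2 / (n * D)) x := by
  have hlinear : HasDerivAt (fun y => 2 / (n * D) * y) (2 / (n * D)) x := by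
    simpa using (hasDerivAt_id x).const_mul (2 / (n * D))
  refine hlinear.congr_of_eventuallyEq ?_
  filter_upwards [isOpen_ne.mem_nhds hx] with y hy
  rw [(hasDerivAt_one_div_mul_log_sq_div hD.ne' hy).deriv,
    exp_mul_one_div_mul_log hn (by positivity)]
  field_simp

theorem stmt1_general (n α C : ℝ) (hn : n ≠ 0) (Ω : Set (ℝ × ℝ))
    (hden : ∀ p ∈ Ω, 0 < C - (α * n + 2) * p.1)
    (hx : ∀ p ∈ Ω, 0 < p.2)
    (u : ℝ → ℝ → ℝ)
    (hu : ∀ t x, u t x = (1 / n) * Real.log (x ^ 2 / (C - (α * n + 2) * t))) :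
    ∀ p ∈ Ω, deriv (fun s => u s p.2) p.1 =
      deriv (fun y => Real.exp (n * u p.1 y) * deriv (fun z => u p.1 z) y) p.2
        + α / p.2 ^ 2 * Real.exp (n * u p.1 p.2) := by
  rintro ⟨t, x⟩ hp
  have hD : 0 < C - (α * n + 2) * t := hden _ hp
  have hx₀ : 0 < x := hx _ hp
  obtain rfl : u = fun t x => 1 / n * log (x ^ 2 / (C - (α * n + 2) * t)) :=
    funext fun t => funext (hu t)
  dsimp only
  rw [(hasDerivAt_one_div_mul_log_div_affine (pow_ne_zero 2 hx₀.ne') hD.ne').deriv,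
    (hasDerivAt_exp_mul_deriv_one_div_mul_log_sq_div hn hD hx₀.ne').deriv,
    exp_mul_one_div_mul_log hn (by positivity)]
  field_simp
  ring

/-- u = (1/n) log(x²/(C-(αn+2)t)) solves
u_t = (e^{nu}u_x)_x + α x^{-2} e^{nu} on Ω. -/
theorem stmt1 (n α C : ℝ) (hn : n ≠ 0) (Ω : Set (ℝ × ℝ)) (hΩ : IsOpen Ω)
    (hden : ∀ p ∈ Ω, 0 < C - (α * n + 2) * p.1)
    (hx : ∀ p ∈ Ω, 0 < p.2)
    (u : ℝ → ℝ → ℝ)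
    (hu : ∀ t x, u t x = (1 / n) * Real.log (x ^ 2 / (C - (α * n + 2) * t))) :
    ∀ p ∈ Ω, deriv (fun s => u s p.2) p.1 =
      deriv (fun y => Real.exp (n * u p.1 y) * deriv (fun z => u p.1 z) y) p.2
        + α / p.2 ^ 2 * Real.exp (n * u p.1 p.2) :=
  stmt1_general n α C hn Ω hden hx u hu
end

section
/- Let n ≠ 0, f, h : ℝ → ℝ smooth with f nowhere zero, and suppose φ : ℝ → ℝ is smooth and satisfies φ'' + n h φ = 0. Then for every smooth solution u(t,x) of f(x) u_t = (e^{nu} u_x)_x + h(x) e^{nu}, the divergence identity D_t( φ f u ) + D_x( −φ e^{nu} u_x + (1/n) φ' e^{nu} ) = 0 holds identically. -/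
open scoped ContDiff


/-- conservation law of f u_t = (e^{nu}u_x)_x + h e^{nu} with
characteristic φ, where φ'' + n h φ = 0:
D_t(φ f u) + D_x(-φ e^{nu} u_x + (1/n) φ' e^{nu}) = 0. -/
theorem stmt5 (n : ℝ) (hn : n ≠ 0) (f h : ℝ → ℝ)
    (hf : ContDiff ℝ (⊤ : ℕ∞) f) (hh : ContDiff ℝ (⊤ : ℕ∞) h) (hfz : ∀ x, f x ≠ 0)
    (φ : ℝ → ℝ) (hφ : ContDiff ℝ (⊤ : ℕ∞) φ)
    (hode : ∀ x, deriv (deriv φ) x + n * h x * φ x = 0)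
    (u : ℝ → ℝ → ℝ) (hu : ContDiff ℝ (⊤ : ℕ∞) (Function.uncurry u))
    (hpde : ∀ t x, f x * deriv (fun s => u s x) t =
      deriv (fun y => Real.exp (n * u t y) * deriv (fun z => u t z) y) x
        + h x * Real.exp (n * u t x)) :
    ∀ t x, deriv (fun s => φ x * f x * u s x) t
      + deriv (fun y => -φ y * Real.exp (n * u t y) * deriv (fun z => u t z) y
          + (1 / n) * deriv φ y * Real.exp (n * u t y)) x = 0 := by
  intro t x
  -- smoothness of slices
  have hut : ContDiff ℝ (⊤ : ℕ∞) (fun y => u t y) :=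
    hu.comp (f := fun y : ℝ => (t, y)) (ContDiff.prodMk (contDiff_const (c := t)) contDiff_id)
  have hts : ContDiff ℝ (⊤ : ℕ∞) (fun s => u s x) :=
    hu.comp (f := fun s : ℝ => (s, x)) (ContDiff.prodMk contDiff_id (contDiff_const (c := x)))
  -- time derivative
  have hut2 : ContDiff ℝ ∞ (fun y => u t y) := hut.of_le (by simp)
  have hφ2 : ContDiff ℝ ∞ φ := hφ.of_le (by simp)
  have hD1 : deriv (fun s => φ x * f x * u s x) t
      = φ x * f x * deriv (fun s => u s x) t := by
    exact deriv_const_mul _ ((contDiff_infty_iff_deriv.mp (hts.of_le (by simp))).1 t)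
  -- abbreviations
  set ut' := deriv (fun s => u s x) t with hut'
  have huxd : ContDiff ℝ ∞ (deriv (fun y => u t y)) :=
    (contDiff_infty_iff_deriv.mp hut2).2
  have hφ' : HasDerivAt φ (deriv φ x) x :=
    ((contDiff_infty_iff_deriv.mp hφ2).1 x).hasDerivAt
  have hφ'' : HasDerivAt (deriv φ) (deriv (deriv φ) x) x :=
    ((contDiff_infty_iff_deriv.mp (contDiff_infty_iff_deriv.mp hφ2).2).1 x).hasDerivAt
  have huE : HasDerivAt (fun y => u t y) (deriv (fun y => u t y) x) x :=
    ((contDiff_infty_iff_deriv.mp hut2).1 x).hasDerivAt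
  have hEx : HasDerivAt (fun y => Real.exp (n * u t y))
      (Real.exp (n * u t x) * (n * deriv (fun y => u t y) x)) x :=
    (huE.const_mul n).exp
  have huxd' : HasDerivAt (deriv (fun y => u t y))
      (deriv (deriv (fun y => u t y)) x) x :=
    ((contDiff_infty_iff_deriv.mp huxd).1 x).hasDerivAt
  set E := Real.exp (n * u t x) with hE
  set ux := deriv (fun y => u t y) x with hux
  set ux2 := deriv (deriv (fun y => u t y)) x with hux2
  set dφ := deriv φ x with hdφ
  set ddφ := deriv (deriv φ) x with hddφ
  -- derivative of g = E * u_x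
  have hg : HasDerivAt (fun y => Real.exp (n * u t y) * deriv (fun z => u t z) y)
      (E * (n * ux) * ux + E * ux2) x := hEx.mul huxd'
  -- use the PDE to relate
  have hpde' : f x * ut' = (E * (n * ux) * ux + E * ux2) + h x * E := by
    have := hpde t x
    rwa [hg.deriv] at this
  -- derivative of the flux
  have h1 : HasDerivAt
      (fun y => -φ y * Real.exp (n * u t y) * deriv (fun z => u t z) y)
      ((-dφ * E + -φ x * (E * (n * ux))) * ux + (-φ x * E) * ux2) x :=
    (hφ'.neg.mul hEx).mul huxd'
  have h2 : HasDerivAt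
      (fun y => (1 / n) * deriv φ y * Real.exp (n * u t y))
      ((1 / n * ddφ) * E + (1 / n * dφ) * (E * (n * ux))) x :=
    (hφ''.const_mul (1 / n)).mul hEx
  have hD2 : deriv (fun y => -φ y * Real.exp (n * u t y) * deriv (fun z => u t z) y
          + (1 / n) * deriv φ y * Real.exp (n * u t y)) x
      = ((-dφ * E + -φ x * (E * (n * ux))) * ux + (-φ x * E) * ux2)
        + ((1 / n * ddφ) * E + (1 / n * dφ) * (E * (n * ux))) := (h1.add h2).deriv
  rw [hD1, hD2]
  have hode' : ddφ = -(n * h x * φ x) := by have := hode x; linarith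
  rw [hode']
  have hsub : -φ x * E * ux2 = -φ x * (f x * ut' - E * (n * ux) * ux - h x * E) := by
    have : E * ux2 = f x * ut' - E * (n * ux) * ux - h x * E := by linarith
    rw [← this]; ring
  rw [hsub]
  field_simp
  ring
end

section
/- Let n ≠ 0, α ∈ ℝ, and f : ℝ → ℝ smooth, nowhere zero. For every smooth solution u(t,x) of f(x) u_t = (e^{nu} u_x)_x + α f(x), the identity D_t( x f(x) (u − α t) ) + D_x( −x e^{nu} u_x + (1/n) e^{nu} ) = 0 holds identically, and also D_t( f(x)(u − α t) ) + D_x( −e^{nu} u_x ) = 0. -/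
/-- conserved vectors with characteristics x and 1 of
f u_t = (e^{nu}u_x)_x + α f. -/
theorem stmt6 (n α : ℝ) (hn : n ≠ 0) (f : ℝ → ℝ)
    (hf : ContDiff ℝ (⊤ : ℕ∞) f) (hfz : ∀ x, f x ≠ 0)
    (u : ℝ → ℝ → ℝ) (hu : ContDiff ℝ (⊤ : ℕ∞) (Function.uncurry u))
    (hpde : ∀ t x, f x * deriv (fun s => u s x) t =
      deriv (fun y => Real.exp (n * u t y) * deriv (fun z => u t z) y) x
        + α * f x) :
    (∀ t x, deriv (fun s => x * f x * (u s x - α * s)) t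
      + deriv (fun y => -(y * Real.exp (n * u t y) * deriv (fun z => u t z) y)
          + (1 / n) * Real.exp (n * u t y)) x = 0) ∧
    (∀ t x, deriv (fun s => f x * (u s x - α * s)) t
      + deriv (fun y => -(Real.exp (n * u t y) * deriv (fun z => u t z) y)) x = 0) := by
  -- partial-in-x function and its smoothness
  have hux : ∀ t : ℝ, ContDiff ℝ (⊤ : ℕ∞) (fun y => u t y) := by
    intro t
    exact hu.comp (ContDiff.prodMk contDiff_const contDiff_id)
  have hut : ∀ x : ℝ, ContDiff ℝ (⊤ : ℕ∞) (fun s => u s x) := by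
    intro x
    exact hu.comp (ContDiff.prodMk contDiff_id contDiff_const)
  -- derivative of partial is smooth
  have hdux : ∀ t : ℝ, ContDiff ℝ (⊤ : ℕ∞) (deriv (fun y => u t y)) := by
    intro t
    exact ((contDiff_infty_iff_deriv.mp ((hux t).of_le (by simp))).2)
  -- E t = flux function, differentiable in y
  have hE : ∀ t : ℝ, Differentiable ℝ
      (fun y => Real.exp (n * u t y) * deriv (fun z => u t z) y) := by
    intro t
    exact ((((((hux t).of_le (by simp)).const_smul n)).exp.mul (hdux t)).differentiable (by simp))
  -- time derivative computation
  have htd : ∀ (c t x : ℝ), deriv (fun s => c * (u s x - α * s)) t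
      = c * (deriv (fun s => u s x) t - α) := by
    intro c t x
    have h1 : HasDerivAt (fun s => u s x) (deriv (fun s => u s x) t) t :=
      (((hut x).differentiable (by simp)) t).hasDerivAt
    have h2 : HasDerivAt (fun s : ℝ => α * s) (α * 1) t :=
      (hasDerivAt_id t).const_mul α
    have := ((h1.sub h2).const_mul c).deriv
    simpa using this
  constructor
  · intro t x
    set g' := deriv (fun y => u t y) with hg'
    have hgd : HasDerivAt (fun y => u t y) (g' x) x :=
      (((hux t).differentiable (by simp)) x).hasDerivAt
    have hexp : HasDerivAt (fun y => Real.exp (n * u t y))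
        (Real.exp (n * u t x) * (n * g' x)) x :=
      ((hgd.const_mul n).exp)
    set E := fun y => Real.exp (n * u t y) * deriv (fun z => u t z) y with hEdef
    have hEd : HasDerivAt E (deriv E x) x := ((hE t) x).hasDerivAt
    have hyE : HasDerivAt (fun y => y * E y) (1 * E x + x * deriv E x) x :=
      (hasDerivAt_id x).mul hEd
    have hflux : deriv (fun y => -(y * Real.exp (n * u t y) * deriv (fun z => u t z) y)
          + (1 / n) * Real.exp (n * u t y)) x
        = -(1 * E x + x * deriv E x) + (1 / n) * (Real.exp (n * u t x) * (n * g' x)) := by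
      have : HasDerivAt (fun y => -(y * E y) + (1 / n) * Real.exp (n * u t y))
          (-(1 * E x + x * deriv E x) + (1 / n) * (Real.exp (n * u t x) * (n * g' x))) x :=
        hyE.neg.add (hexp.const_mul (1 / n))
      have := this.deriv
      rw [← this]
      congr 1
      funext y
      simp [hEdef, mul_assoc]
    have hEx : E x = Real.exp (n * u t x) * g' x := rfl
    have hpd := hpde t x
    rw [htd (x * f x) t x, hflux]
    have hEq : deriv E x = f x * deriv (fun s => u s x) t - α * f x := by
      rw [hpd]; ring
    rw [hEx, hEq]
    field_simp
    ring
  · intro t x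
    set E := fun y => Real.exp (n * u t y) * deriv (fun z => u t z) y with hEdef
    have hflux : deriv (fun y => -(Real.exp (n * u t y) * deriv (fun z => u t z) y)) x
        = -(deriv E x) := by
      have : HasDerivAt (fun y => -(E y)) (-(deriv E x)) x := (((hE t) x).hasDerivAt).neg
      exact this.deriv
    have hpd := hpde t x
    rw [htd (f x) t x, hflux]
    have hEq : deriv E x = f x * deriv (fun s => u s x) t - α * f x := by
      rw [hpd]; ring
    rw [hEq]
    ring
end

section
/- Let n ≠ 0, α ∈ ℝ with αn + 2 ≠ 0, and C ∈ ℝ. On an open set where x > 0 and C − (αn + 2 + 4/n)t > 0, the function u(t,x) := ( x² / (C − (αn + 2 + 4n^{-1}) t) )^{1/n} is a positive solution of u_t = (u^n u_x)_x + α x^{-2} u^{n+1}. -/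
/-!
Write `D = C - k t` with `k = αn + 2 + 4/n`, so that `u = (x²/D)^{1/n}`. Logarithmic
differentiation gives `u_t = k u / (n D)` and `u_x = 2u / (n x)`. Since `u^n = x²/D`, the flux
`u^n u_x = 2 x u / (n D)` is `x u` up to a constant, so `(u^n u_x)_x = 2(n + 2) u / (n² D)`,
while the reaction term is `α x⁻² u^{n+1} = α u / D`. The two sides are then both
`(α + 2/n + 4/n²) u / D`.
-/

theorem HasDerivAt.rpow_const_of_pos {f : ℝ → ℝ} {f' t a : ℝ} (hf : HasDerivAt f f' t)
    (hpos : 0 < f t) : HasDerivAt (fun s => f s ^ a) (a * f' / f t * f t ^ a) t := by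
  convert hf.rpow_const (p := a) (Or.inl hpos.ne') using 1
  rw [Real.rpow_sub_one hpos.ne']
  ring

theorem hasDerivAt_sq_div_sub_mul_rpow {x C k a t : ℝ} (hx : x ≠ 0) (hD : 0 < C - k * t) :
    HasDerivAt (fun s => (x ^ 2 / (C - k * s)) ^ a)
      (a * k / (C - k * t) * (x ^ 2 / (C - k * t)) ^ a) t := by
  have hden : HasDerivAt (fun s => C - k * s) (-k) t := by
    simpa using ((hasDerivAt_id t).const_mul k).const_sub C
  have hquot : HasDerivAt (fun s => x ^ 2 / (C - k * s))
      ((0 * (C - k * t) - x ^ 2 * -k) / (C - k * t) ^ 2) t :=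
    (hasDerivAt_const t (x ^ 2)).div hden hD.ne'
  convert hquot.rpow_const_of_pos (a := a) (by positivity) using 1
  field_simp
  ring

theorem hasDerivAt_sq_div_rpow {D y a : ℝ} (hD : 0 < D) (hy : 0 < y) :
    HasDerivAt (fun z => (z ^ 2 / D) ^ a) (2 * a / y * (y ^ 2 / D) ^ a) y := by
  convert ((hasDerivAt_pow 2 y).div_const D).rpow_const_of_pos (a := a) (by positivity) using 1
  field_simp
  ring

theorem sq_div_rpow_flux {n D y : ℝ} (hn : n ≠ 0) (hD : 0 < D) (hy : 0 < y) :
    ((y ^ 2 / D) ^ (1 / n)) ^ n * deriv (fun z => (z ^ 2 / D) ^ (1 / n)) y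
      = 2 / (n * D) * (y * (y ^ 2 / D) ^ (1 / n)) := by
  rw [(hasDerivAt_sq_div_rpow hD hy).deriv, one_div, Real.rpow_inv_rpow (by positivity) hn]
  field_simp

theorem deriv_sq_div_rpow_flux {n D x : ℝ} (hn : n ≠ 0) (hD : 0 < D) (hx : 0 < x) :
    deriv (fun y => ((y ^ 2 / D) ^ (1 / n)) ^ n * deriv (fun z => (z ^ 2 / D) ^ (1 / n)) y) x
      = 2 * (n + 2) / (n ^ 2 * D) * (x ^ 2 / D) ^ (1 / n) := by
  have hflux : (fun y => ((y ^ 2 / D) ^ (1 / n)) ^ n * deriv (fun z => (z ^ 2 / D) ^ (1 / n)) y)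
      =ᶠ[nhds x] fun y => 2 / (n * D) * (y * (y ^ 2 / D) ^ (1 / n)) := by
    filter_upwards [Ioi_mem_nhds hx] with y hy using sq_div_rpow_flux hn hD hy
  have hprod : HasDerivAt (fun y => 2 / (n * D) * (y * (y ^ 2 / D) ^ (1 / n)))
      (2 / (n * D) * (1 * (x ^ 2 / D) ^ (1 / n) + x * (2 * (1 / n) / x * (x ^ 2 / D) ^ (1 / n))))
      x :=
    ((hasDerivAt_id' x).mul (hasDerivAt_sq_div_rpow hD hx)).const_mul _
  rw [hflux.deriv_eq, hprod.deriv]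
  field_simp

theorem rpow_one_div_rpow_add_one {b n : ℝ} (hb : 0 < b) (hn : n ≠ 0) :
    (b ^ (1 / n)) ^ (n + 1) = b * b ^ (1 / n) := by
  rw [Real.rpow_add_one (by positivity), one_div, Real.rpow_inv_rpow hb.le hn]

theorem stmt14_general (n α C : ℝ) (hn : n ≠ 0)
    (Ω : Set (ℝ × ℝ))
    (hx : ∀ p ∈ Ω, 0 < p.2)
    (hden : ∀ p ∈ Ω, 0 < C - (α * n + 2 + 4 / n) * p.1)
    (u : ℝ → ℝ → ℝ)
    (hu : ∀ t x, u t x = (x ^ 2 / (C - (α * n + 2 + 4 / n) * t)) ^ (1 / n)) :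
    ∀ p ∈ Ω, 0 < u p.1 p.2 ∧
      deriv (fun s => u s p.2) p.1 =
        deriv (fun y => u p.1 y ^ n * deriv (fun z => u p.1 z) y) p.2
          + α / p.2 ^ 2 * u p.1 p.2 ^ (n + 1) := by
  rintro ⟨t, x⟩ hp
  have hx0 : 0 < x := hx _ hp
  have hD := hden _ hp
  simp only [hu]
  refine ⟨by positivity, ?_⟩
  rw [(hasDerivAt_sq_div_sub_mul_rpow hx0.ne' hD).deriv, deriv_sq_div_rpow_flux hn hD hx0,
    rpow_one_div_rpow_add_one (by positivity) hn]
  field_simp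
  ring

/-- u = (x²/(C−(αn+2+4/n)t))^{1/n} is a positive solution of
u_t = (u^n u_x)_x + α x^{-2} u^{n+1} where x > 0 and the base is positive. -/
theorem stmt14 (n α C : ℝ) (hn : n ≠ 0) (hαn : α * n + 2 ≠ 0)
    (Ω : Set (ℝ × ℝ)) (hΩ : IsOpen Ω)
    (hx : ∀ p ∈ Ω, 0 < p.2)
    (hden : ∀ p ∈ Ω, 0 < C - (α * n + 2 + 4 / n) * p.1)
    (u : ℝ → ℝ → ℝ)
    (hu : ∀ t x, u t x = (x ^ 2 / (C - (α * n + 2 + 4 / n) * t)) ^ (1 / n)) :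
    ∀ p ∈ Ω, 0 < u p.1 p.2 ∧
      deriv (fun s => u s p.2) p.1 =
        deriv (fun y => u p.1 y ^ n * deriv (fun z => u p.1 z) y) p.2
          + α / p.2 ^ 2 * u p.1 p.2 ^ (n + 1) :=
  stmt14_general n α C hn Ω hx hden u hu
end

section
/- Fix n ∉ {0,−1}, let h : ℝ → ℝ be smooth, let φ satisfy φ'' + (n+1) h φ = 0 on an interval, and let f be smooth and nowhere zero. Then for every smooth positive solution u(t,x) of f(x) u_t = (u^n u_x)_x + h(x) u^{n+1}, the identity D_t( φ f u ) + D_x( −φ u^n u_x + φ' u^{n+1}/(n+1) ) = 0 holds identically. -/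
/-- conservation law of f u_t = (u^n u_x)_x + h u^{n+1}
(case m = n+1, n ≠ −1) with characteristic φ, where φ'' + (n+1)hφ = 0 on I:
D_t(φ f u) + D_x(−φ u^n u_x + φ' u^{n+1}/(n+1)) = 0. -/
theorem stmt16 (n : ℝ) (hn : n ≠ 0) (hn1 : n ≠ -1)
    (f h : ℝ → ℝ) (hf : ContDiff ℝ (⊤ : ℕ∞) f) (hh : ContDiff ℝ (⊤ : ℕ∞) h)
    (hfz : ∀ x, f x ≠ 0)
    (I : Set ℝ) (φ : ℝ → ℝ) (hφ : ContDiff ℝ (⊤ : ℕ∞) φ)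
    (hode : ∀ x ∈ I, deriv (deriv φ) x + (n + 1) * h x * φ x = 0)
    (u : ℝ → ℝ → ℝ) (hu : ContDiff ℝ (⊤ : ℕ∞) (Function.uncurry u))
    (hupos : ∀ t x, 0 < u t x)
    (hpde : ∀ t, ∀ x ∈ I, f x * deriv (fun s => u s x) t =
      deriv (fun y => u t y ^ n * deriv (fun z => u t z) y) x
        + h x * u t x ^ (n + 1)) :
    ∀ t, ∀ x ∈ I, deriv (fun s => φ x * f x * u s x) t
      + deriv (fun y => -φ y * u t y ^ n * deriv (fun z => u t z) y
          + deriv φ y * u t y ^ (n + 1) / (n + 1)) x = 0 := by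
  intro t x hx
  -- smoothness of slices
  have hut : ContDiff ℝ (⊤ : ℕ∞) (fun y => u t y) :=
    hu.comp (contDiff_const.prodMk contDiff_id)
  have htx : ContDiff ℝ (⊤ : ℕ∞) (fun s => u s x) :=
    hu.comp (contDiff_id.prodMk contDiff_const)
  have hU' : ContDiff ℝ (⊤:ℕ∞) (deriv fun y => u t y) :=
    (contDiff_infty_iff_deriv.mp (hut.of_le (by simp))).2
  set U : ℝ → ℝ := fun y => u t y with hUdef
  have hUx : U x ≠ 0 := ne_of_gt (hupos t x)
  -- HasDerivAt facts at x
  have hUd : HasDerivAt U (deriv U x) x :=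
    (hut.differentiable (by simp) x).hasDerivAt
  have hU'd : HasDerivAt (deriv U) (deriv (deriv U) x) x :=
    (hU'.differentiable (by simp) x).hasDerivAt
  have hφd : HasDerivAt φ (deriv φ x) x :=
    (hφ.differentiable (by simp) x).hasDerivAt
  have hφ'd : HasDerivAt (deriv φ) (deriv (deriv φ) x) x :=
    ((contDiff_infty_iff_deriv.mp (hφ.of_le (by simp))).2.differentiable (by simp) x).hasDerivAt
  have hpow : HasDerivAt (fun y => U y ^ n)
      (deriv U x * n * U x ^ (n - 1)) x :=
    hUd.rpow_const (Or.inl hUx)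
  have hpow1 : HasDerivAt (fun y => U y ^ (n + 1))
      (deriv U x * (n + 1) * U x ^ (n + 1 - 1)) x :=
    hUd.rpow_const (Or.inl hUx)
  have hW : HasDerivAt (fun y => U y ^ n * deriv U y)
      (deriv U x * n * U x ^ (n - 1) * deriv U x + U x ^ n * deriv (deriv U) x) x :=
    hpow.mul hU'd
  -- spatial flux derivative
  have hF : HasDerivAt (fun y => -φ y * U y ^ n * deriv U y
      + deriv φ y * U y ^ (n + 1) / (n + 1))
      ((-deriv φ x * U x ^ n + -φ x * (deriv U x * n * U x ^ (n - 1))) * deriv U x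
        + -φ x * U x ^ n * deriv (deriv U) x
        + (deriv (deriv φ) x * U x ^ (n + 1)
            + deriv φ x * (deriv U x * (n + 1) * U x ^ (n + 1 - 1))) / (n + 1)) x :=
    (((hφd.neg.mul hpow).mul hU'd).add ((hφ'd.mul hpow1).div_const (n + 1)))
  -- time derivative
  have hdt : deriv (fun s => φ x * f x * u s x) t
      = φ x * f x * deriv (fun s => u s x) t := by
    exact deriv_const_mul _ (htx.differentiable (by simp) t)
  have hpde' := hpde t x hx
  rw [hdt, hF.deriv]
  have hWd : deriv (fun y => U y ^ n * deriv U y) x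
      = deriv U x * n * U x ^ (n - 1) * deriv U x + U x ^ n * deriv (deriv U) x :=
    hW.deriv
  rw [show (fun y => u t y ^ n * deriv (fun z => u t z) y) = (fun y => U y ^ n * deriv U y) from rfl] at hpde'
  have hode' := hode x hx
  have hne : (n : ℝ) + 1 ≠ 0 := by intro h0; apply hn1; linarith
  rw [hWd] at hpde'
  have key2 : f x * deriv (fun s => u s x) t
      = deriv U x * n * U x ^ (n - 1) * deriv U x + U x ^ n * deriv (deriv U) x
        + h x * U x ^ (n + 1) := hpde'
  rw [add_sub_cancel_right]
  field_simp
  linear_combination (n + 1) * φ x * key2 + U x ^ (n + 1) * hode'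
end

section
/- Let n ≠ 0, α ∈ ℝ, and f smooth and nowhere zero. For every smooth positive solution u(t,x) of f(x)u_t = (u^n u_x)_x + α f(x) u with n ≠ −1, the identities D_t( x e^{−αt} f u ) + D_x( e^{−αt}( −x u^n u_x + u^{n+1}/(n+1) ) ) = 0 and D_t( e^{−αt} f u ) + D_x( −e^{−αt} u^n u_x ) = 0 hold identically. -/
open scoped ContDiff


/-- the two conserved vectors (characteristics xe^{−αt}, e^{−αt})
of f u_t = (u^n u_x)_x + α f u, n ≠ −1. -/
theorem stmt17 (n α : ℝ) (hn : n ≠ 0) (hn1 : n ≠ -1)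
    (f : ℝ → ℝ) (hf : ContDiff ℝ (⊤ : ℕ∞) f) (hfz : ∀ x, f x ≠ 0)
    (u : ℝ → ℝ → ℝ) (hu : ContDiff ℝ (⊤ : ℕ∞) (Function.uncurry u))
    (hupos : ∀ t x, 0 < u t x)
    (hpde : ∀ t x, f x * deriv (fun s => u s x) t =
      deriv (fun y => u t y ^ n * deriv (fun z => u t z) y) x
        + α * f x * u t x) :
    (∀ t x, deriv (fun s => x * Real.exp (-α * s) * f x * u s x) t
      + deriv (fun y => Real.exp (-α * t) *
          (-(y * u t y ^ n * deriv (fun z => u t z) y) + u t y ^ (n + 1) / (n + 1))) x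
      = 0) ∧
    (∀ t x, deriv (fun s => Real.exp (-α * s) * f x * u s x) t
      + deriv (fun y => -(Real.exp (-α * t) * u t y ^ n * deriv (fun z => u t z) y)) x
      = 0) := by
  have hn1' : n + 1 ≠ 0 := fun h => hn1 (by linarith)
  -- smoothness of slices
  have h1 : (∞ : WithTop ℕ∞) ≠ 0 := by simp
  have hu' : ContDiff ℝ ∞ (Function.uncurry u) := hu.of_le (by simp)
  have hUt : ∀ t, ContDiff ℝ ∞ (fun y => u t y) := fun t =>
    hu'.comp (contDiff_const.prodMk contDiff_id)
  have hUx : ∀ x, ContDiff ℝ ∞ (fun s => u s x) := fun x =>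
    hu'.comp (contDiff_id.prodMk contDiff_const)
  have hW : ∀ t, ContDiff ℝ ∞ (deriv (fun y => u t y)) := fun t =>
    (contDiff_infty_iff_deriv.mp (hUt t)).2
  -- time derivative HasDerivAt
  have hut : ∀ t x, HasDerivAt (fun s => u s x) (deriv (fun s => u s x) t) t := fun t x =>
    (((hUx x).differentiable h1) t).hasDerivAt
  -- space derivatives
  have hwy : ∀ t y, HasDerivAt (fun z => u t z) (deriv (fun z => u t z) y) y := fun t y =>
    (((hUt t).differentiable h1) y).hasDerivAt
  have hwy' : ∀ t y, HasDerivAt (deriv (fun z => u t z)) (deriv (deriv (fun z => u t z)) y) y :=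
    fun t y => (((hW t).differentiable h1) y).hasDerivAt
  -- derivative of u^n
  have hpow : ∀ t y, HasDerivAt (fun z => u t z ^ n)
      (deriv (fun z => u t z) y * n * u t y ^ (n - 1)) y := fun t y =>
    (hwy t y).rpow_const (Or.inl (hupos t y).ne')
  -- derivative of g = u^n * u_y
  set w : ℝ → ℝ → ℝ := fun t y => deriv (fun z => u t z) y with hwdef
  have hg : ∀ t y, HasDerivAt (fun z => u t z ^ n * deriv (fun z' => u t z') z)
      (deriv (fun z => u t z) y * n * u t y ^ (n - 1) * w t y + u t y ^ n * deriv (w t) y) y := fun t y =>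
    (hpow t y).mul (hwy' t y)
  have hgd : ∀ t y, deriv (fun z => u t z ^ n * deriv (fun z' => u t z') z) y
      = w t y * n * u t y ^ (n - 1) * w t y + u t y ^ n * deriv (w t) y := fun t y =>
    (hg t y).deriv
  -- exp derivative
  have hE : ∀ t : ℝ, HasDerivAt (fun s => Real.exp (-α * s)) (Real.exp (-α * t) * (-α)) t := by
    intro t
    have : HasDerivAt (fun s : ℝ => -α * s) (-α) t := by
      simpa using (hasDerivAt_id t).const_mul (-α)
    simpa using this.exp
  constructor
  · intro t x
    -- time part
    have hT : HasDerivAt (fun s => x * Real.exp (-α * s) * f x * u s x)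
        ((x * (Real.exp (-α * t) * (-α)) * f x) * u t x
          + (x * Real.exp (-α * t) * f x) * deriv (fun s => u s x) t) t :=
      (((hE t).const_mul x).mul_const (f x)).mul (hut t x)
    -- space part
    have hF1 : HasDerivAt (fun y => y * u t y ^ n * deriv (fun z => u t z) y)
        ((1 * (u t x ^ n) + x * (w t x * n * u t x ^ (n - 1))) * w t x
          + (x * u t x ^ n) * deriv (w t) x) x := by
      exact (((hasDerivAt_id x).mul (hpow t x)).mul (hwy' t x))
    have hF2 : HasDerivAt (fun y => u t y ^ (n + 1) / (n + 1))
        ((w t x * (n + 1) * u t x ^ (n + 1 - 1)) / (n + 1)) x :=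
      ((hwy t x).rpow_const (Or.inl (hupos t x).ne')).div_const _
    have hF : HasDerivAt (fun y => Real.exp (-α * t) *
          (-(y * u t y ^ n * deriv (fun z => u t z) y) + u t y ^ (n + 1) / (n + 1)))
        (Real.exp (-α * t) *
          (-((1 * (u t x ^ n) + x * (w t x * n * u t x ^ (n - 1))) * w t x
            + (x * u t x ^ n) * deriv (w t) x)
          + (w t x * (n + 1) * u t x ^ (n + 1 - 1)) / (n + 1))) x :=
      (hF1.neg.add hF2).const_mul _
    rw [hT.deriv, hF.deriv]
    have hp := hpde t x
    rw [hgd t x] at hp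
    have hs : n + 1 - 1 = n := by ring
    rw [hs]
    have hfu : f x * deriv (fun s => u s x) t
        = w t x * n * u t x ^ (n - 1) * w t x + u t x ^ n * deriv (w t) x
          + α * f x * u t x := hp
    have hc : w t x * (n + 1) * u t x ^ n / (n + 1) = w t x * u t x ^ n := by
      field_simp
    rw [hc]
    linear_combination x * Real.exp (-α * t) * hfu
  · intro t x
    have hT : HasDerivAt (fun s => Real.exp (-α * s) * f x * u s x)
        ((Real.exp (-α * t) * (-α) * f x) * u t x
          + (Real.exp (-α * t) * f x) * deriv (fun s => u s x) t) t :=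
      ((hE t).mul_const (f x)).mul (hut t x)
    have hF : HasDerivAt (fun y => -(Real.exp (-α * t) * u t y ^ n * deriv (fun z => u t z) y))
        (-((Real.exp (-α * t) * (w t x * n * u t x ^ (n - 1))) * w t x
          + (Real.exp (-α * t) * u t x ^ n) * deriv (w t) x)) x :=
      ((((hpow t x).const_mul (Real.exp (-α * t))).mul (hwy' t x))).neg
    rw [hT.deriv, hF.deriv]
    have hp := hpde t x
    rw [hgd t x] at hp
    linear_combination Real.exp (-α * t) * hp
end

section
/- Fix n ≠ 0 and constants δ₀, δ₁, δ₃ ∈ ℝ \ {0}, δ₂ ∈ ℝ, and smooth functions φ, Ψ : ℝ → ℝ with φ' ≠ 0 and Ψ > 0 on an interval. Define ψ = −(δ₃/n) log Ψ, t̃ = δ₁t + δ₂, x̃ = φ(x), ũ = δ₃u + ψ(x), and f̃ = (δ₀δ₁/φ')Ψ f, g̃ = δ₀ φ' Ψ² g, h̃ = (δ₀δ₃/(nφ'))·(n h Ψ + (gΨ')' )·Ψ, ñ = n/δ₃. If u(t,x) is a smooth solution of f(x)u_t = (g(x)e^{nu}u_x)_x + h(x)e^{nu}, then ũ as a function of (t̃,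 x̃) is a smooth solution of f̃(x̃)ũ_{t̃} = (g̃(x̃)e^{ñũ}ũ_{x̃})_{x̃} + h̃(x̃)e^{ñũ}. -/
open Filter Topology


lemma hasDerivAt_of_comp (φ A B : ℝ → ℝ) (s₀ b : ℝ)
    (hφ : ContDiff ℝ (⊤ : ℕ∞) φ) (hφ' : deriv φ s₀ ≠ 0)
    (hAB : ∀ s, A (φ s) = B s) (hB : HasDerivAt B b s₀) :
    HasDerivAt A (b / deriv φ s₀) (φ s₀) := by
  have hs : HasStrictDerivAt φ (deriv φ s₀) s₀ := hφ.contDiffAt.hasStrictDerivAt (by simp)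
  set Φ := hs.localInverse φ (deriv φ s₀) s₀ hφ' with hΦdef
  have hΦ : HasDerivAt Φ (deriv φ s₀)⁻¹ (φ s₀) := (hs.to_localInverse hφ').hasDerivAt
  have hΦx : Φ (φ s₀) = s₀ := (hs.hasStrictFDerivAt_equiv hφ').localInverse_apply_image
  have hri : ∀ᶠ y in 𝓝 (φ s₀), φ (Φ y) = y :=
    (hs.hasStrictFDerivAt_equiv hφ').eventually_right_inverse
  have heq : A =ᶠ[𝓝 (φ s₀)] fun y => B (Φ y) := by
    filter_upwards [hri] with y hy
    rw [← hAB (Φ y), hy]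
  have hc : HasDerivAt (fun y => B (Φ y)) (b * (deriv φ s₀)⁻¹) (φ s₀) := by
    have := HasDerivAt.comp (φ s₀) (hΦx ▸ hB) hΦ
    exact this
  have := hc.congr_of_eventuallyEq heq
  simpa [div_eq_mul_inv] using this

/-- the transformations of Theorem 2 (conditional equivalence group
for m = n) map solutions of f u_t = (g e^{nu}u_x)_x + h e^{nu} to solutions of
f̃ ũ_{t̃} = (g̃ e^{ñũ}ũ_{x̃})_{x̃} + h̃ e^{ñũ}, with t̃ = δ₁t+δ₂, x̃ = φ(x),
ũ = δ₃u + ψ(x), ψ = −(δ₃/n) log Ψ, f̃ = (δ₀δ₁/φ')Ψf, g̃ = δ₀φ'Ψ²g,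
h̃ = (δ₀δ₃/(nφ'))(nhΨ + (gΨ')')Ψ, ñ = n/δ₃. -/
theorem stmt18 (n δ₀ δ₁ δ₂ δ₃ : ℝ) (hn : n ≠ 0)
    (h0 : δ₀ ≠ 0) (h1 : δ₁ ≠ 0) (h3 : δ₃ ≠ 0)
    (φ Ψ f g h : ℝ → ℝ)
    (hφ : ContDiff ℝ (⊤ : ℕ∞) φ) (hΨ : ContDiff ℝ (⊤ : ℕ∞) Ψ)
    (hf : ContDiff ℝ (⊤ : ℕ∞) f) (hg : ContDiff ℝ (⊤ : ℕ∞) g) (hh : ContDiff ℝ (⊤ : ℕ∞) h)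
    (hφ' : ∀ x, deriv φ x ≠ 0) (hΨpos : ∀ x, 0 < Ψ x)
    (hfz : ∀ x, f x ≠ 0) (hgz : ∀ x, g x ≠ 0)
    (ψ : ℝ → ℝ) (hψ : ∀ x, ψ x = -(δ₃ / n) * Real.log (Ψ x))
    (ft gt ht : ℝ → ℝ)
    (hft : ∀ x, ft (φ x) = δ₀ * δ₁ / deriv φ x * Ψ x * f x)
    (hgt : ∀ x, gt (φ x) = δ₀ * deriv φ x * Ψ x ^ 2 * g x)
    (hht : ∀ x, ht (φ x) =
      δ₀ * δ₃ / (n * deriv φ x) *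
        (n * h x * Ψ x + deriv (fun y => g y * deriv Ψ y) x) * Ψ x)
    (nt : ℝ) (hnt : nt = n / δ₃)
    (u : ℝ → ℝ → ℝ) (hu : ContDiff ℝ (⊤ : ℕ∞) (Function.uncurry u))
    (hpde : ∀ t x, f x * deriv (fun s => u s x) t =
      deriv (fun y => g y * Real.exp (n * u t y) * deriv (fun z => u t z) y) x
        + h x * Real.exp (n * u t x))
    (ut : ℝ → ℝ → ℝ)
    (hut : ∀ t x, ut (δ₁ * t + δ₂) (φ x) = δ₃ * u t x + ψ x) :
    ∀ t x, ft (φ x) * deriv (fun s => ut s (φ x)) (δ₁ * t + δ₂) =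
      deriv (fun y => gt y * Real.exp (nt * ut (δ₁ * t + δ₂) y)
          * deriv (fun z => ut (δ₁ * t + δ₂) z) y) (φ x)
        + ht (φ x) * Real.exp (nt * ut (δ₁ * t + δ₂) (φ x)) := by
  intro t x
  set T := δ₁ * t + δ₂ with hT
  -- smoothness of partial maps
  have hux : ∀ t₀, ContDiff ℝ (⊤ : ℕ∞) (fun z => u t₀ z) := fun t₀ =>
    show ContDiff ℝ (⊤ : ℕ∞) (Function.uncurry u ∘ fun z => (t₀, z)) from
      hu.comp (ContDiff.prodMk (contDiff_const (c := t₀)) contDiff_id)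
  have hutm : ∀ x₀, ContDiff ℝ (⊤ : ℕ∞) (fun s => u s x₀) := fun x₀ =>
    show ContDiff ℝ (⊤ : ℕ∞) (Function.uncurry u ∘ fun s => (s, x₀)) from
      hu.comp (ContDiff.prodMk contDiff_id (contDiff_const (c := x₀)))
  set UX : ℝ → ℝ := deriv (fun z => u t z) with hUX
  have hUXsm : ContDiff ℝ (⊤ : ℕ∞) UX :=
    (contDiff_infty_iff_deriv.mp ((hux t).of_le (by simp))).2
  have hUXd : ∀ s, HasDerivAt (fun z => u t z) (UX s) s := fun s =>
    (((hux t).differentiable (by simp)) s).hasDerivAt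
  -- time derivative
  set TD : ℝ := deriv (fun s => u s x) t with hTD
  have hTDd : HasDerivAt (fun s => u s x) TD t := (((hutm x).differentiable (by simp)) t).hasDerivAt
  have e1 : (fun s => ut s (φ x)) = fun s => δ₃ * u ((s - δ₂) / δ₁) x + ψ x := by
    funext s
    have h2 := hut ((s - δ₂) / δ₁) x
    rwa [show δ₁ * ((s - δ₂) / δ₁) + δ₂ = s by field_simp; ring] at h2
  have hinner : HasDerivAt (fun s : ℝ => (s - δ₂) / δ₁) (1 / δ₁) T := by
    simpa using ((hasDerivAt_id T).sub_const δ₂).div_const δ₁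
  have hTt : (T - δ₂) / δ₁ = t := by rw [hT]; field_simp; ring
  have hDt : HasDerivAt (fun s => ut s (φ x)) (δ₃ * (TD * (1 / δ₁))) T := by
    rw [e1]
    exact ((HasDerivAt.comp T (hTt ▸ hTDd) hinner).const_mul δ₃).add_const (ψ x)
  -- space derivative of ut T
  set V : ℝ → ℝ := fun s => δ₃ * u t s + ψ s with hV
  set Vd : ℝ → ℝ := fun s => δ₃ * UX s + (-(δ₃ / n)) * (deriv Ψ s / Ψ s) with hVd
  have hVdd : ∀ s, HasDerivAt V (Vd s) s := by
    intro s
    have hlog : HasDerivAt (fun y => Real.log (Ψ y)) (deriv Ψ s / Ψ s) s :=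
      ((hΨ.differentiable (by simp) s).hasDerivAt).log (hΨpos s).ne'
    have : HasDerivAt (fun y => δ₃ * u t y + (-(δ₃ / n)) * Real.log (Ψ y)) (Vd s) s :=
      ((hUXd s).const_mul δ₃).add (hlog.const_mul (-(δ₃ / n)))
    refine this.congr_of_eventuallyEq (Eventually.of_forall fun y => ?_)
    simp only [hV, hψ]
  have hA : ∀ s, HasDerivAt (fun y => ut T y) (Vd s / deriv φ s) (φ s) := fun s =>
    hasDerivAt_of_comp φ (fun y => ut T y) V s (Vd s) hφ (hφ' s) (fun r => hut t r) (hVdd s)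
  -- the W function
  set W : ℝ → ℝ := fun s => gt (φ s) * Real.exp (nt * V s) * (Vd s / deriv φ s) with hW
  have hGW : ∀ s, gt (φ s) * Real.exp (nt * ut T (φ s))
      * deriv (fun z => ut T z) (φ s) = W s := by
    intro s
    rw [hut t s, (hA s).deriv]
  -- exponential identity
  have hexp : ∀ s, Real.exp (nt * V s) = Real.exp (n * u t s) * (Ψ s)⁻¹ := by
    intro s
    have harg : nt * V s = n * u t s + (-Real.log (Ψ s)) := by
      simp only [hV, hψ, hnt]
      field_simp
    rw [harg, Real.exp_add, Real.exp_neg, Real.exp_log (hΨpos s)]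
  -- W equals explicit W₂
  set E : ℝ → ℝ := fun y => Real.exp (n * u t y) with hE
  set W₂ : ℝ → ℝ := fun s => δ₀ * δ₃ *
      (g s * E s * UX s * Ψ s - (1 / n) * (g s * deriv Ψ s) * E s) with hW₂
  have hWeq : W = W₂ := by
    funext s
    simp only [hW, hW₂, hE, hgt s, hexp s, hVd]
    field_simp [hφ' s, (hΨpos s).ne', hn]
    ring
  -- derivative of W₂
  set K : ℝ → ℝ := fun y => g y * Real.exp (n * u t y) * deriv (fun z => u t z) y with hK
  have hKsm : ContDiff ℝ (⊤ : ℕ∞) K := by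
    refine ((hg.of_le (by simp)).mul ?_).mul hUXsm
    exact (Real.contDiff_exp.of_le le_top).comp (((hux t).const_smul n).of_le (by simp))
  have hKd : HasDerivAt K (deriv K x) x := ((hKsm.differentiable (by simp)) x).hasDerivAt
  set Q : ℝ → ℝ := fun y => g y * deriv Ψ y with hQ
  have hQsm : ContDiff ℝ (⊤ : ℕ∞) Q :=
    (hg.of_le (by simp)).mul (contDiff_infty_iff_deriv.mp (hΨ.of_le (by simp))).2
  have hQd : HasDerivAt Q (deriv Q x) x := ((hQsm.differentiable (by simp)) x).hasDerivAt
  have hEd : HasDerivAt E (E x * (n * UX x)) x := by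
    exact (HasDerivAt.exp ((hUXd x).const_mul n))
  have hΨd : HasDerivAt Ψ (deriv Ψ x) x := (hΨ.differentiable (by simp) x).hasDerivAt
  have hW₂d : HasDerivAt W₂
      (δ₀ * δ₃ * ((deriv K x * Ψ x + K x * deriv Ψ x)
        - ((1 / n * deriv Q x) * E x + (1 / n * Q x) * (E x * (n * UX x))))) x := by
    have h1 : HasDerivAt (fun s => K s * Ψ s) (deriv K x * Ψ x + K x * deriv Ψ x) x :=
      hKd.mul hΨd
    have h2 : HasDerivAt (fun s => (1 / n) * Q s * E s)
        ((1 / n * deriv Q x) * E x + (1 / n * Q x) * (E x * (n * UX x))) x :=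
      (hQd.const_mul (1 / n)).mul hEd
    have h3 := (h1.sub h2).const_mul (δ₀ * δ₃)
    refine h3.congr_of_eventuallyEq (Eventually.of_forall fun s => ?_)
    simp only [hW₂, hK, hE, hQ, hUX, Pi.sub_apply]
  -- derivative of the target inner function at φ x
  have hGd' : HasDerivAt
      (fun y => gt y * Real.exp (nt * ut T y) * deriv (fun z => ut T z) y)
      (δ₀ * δ₃ * ((deriv K x * Ψ x + K x * deriv Ψ x)
        - ((1 / n * deriv Q x) * E x + (1 / n * Q x) * (E x * (n * UX x)))) / deriv φ x)
      (φ x) :=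
    hasDerivAt_of_comp φ _ W₂ x _ hφ (hφ' x) (fun s => (hGW s).trans (by rw [hWeq])) hW₂d
  -- assemble
  have hpdex := hpde t x
  rw [← hK, ← hTD] at hpdex
  have hKx : deriv K x = f x * TD - h x * E x := by rw [hpdex]; simp only [hE]; ring
  rw [hDt.deriv, hGd'.deriv, hft x, hht x, hut t x, hexp x, hKx]
  simp only [hV, hQ, hE, hK]
  field_simp [hφ' x, (hΨpos x).ne', hn]
  ring
end

section
/- Fix n ≠ 0 and a smooth nowhere-zero f : ℝ → ℝ defined on an interval I containing x₀ (so f has constant sign on I), and assume f > 0. Define the change of variables t̃ = sign(f) t, x̃ = ∫_{x₀}^{x} f(y)^{2/3} dy, ũ = u + (1/(3n)) log f(x). If u(t,x) solves f(x)u_t = (e^{nu}u_x)_x + h(x)e^{nu} on ℝ × I, then ũ as a function of (t̃, x̃) solves ũ_{t̃} = (e^{nũ}ũ_{x̃})_{x̃} + h̃(x̃) e^{nũ}, where h̃ = f^{−1}( f^{−1/3} h + n^{−1}(f^{−1/3})'' ) expressed in the variable x̃. -/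
open Real Filter
open scoped Topology

private lemma contDiff_deriv' {f : ℝ → ℝ} (hf : ContDiff ℝ 2 f) : ContDiff ℝ 1 (deriv f) := by
  have h : deriv f = fun x => fderiv ℝ f x 1 := funext fun x => (fderiv_apply_one_eq_deriv).symm
  rw [h]
  exact (hf.fderiv_right (by norm_num)).clm_apply contDiff_const

/-- the gauging transformation t̃ = t, x̃ = ∫_{x₀}^x f^{2/3},
ũ = u + (1/(3n)) log f maps solutions of f u_t = (e^{nu}u_x)_x + h e^{nu} on I
to solutions of ũ_{t̃} = (e^{nũ}ũ_{x̃})_{x̃} + h̃ e^{nũ}, where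
h̃ = f^{−1}(f^{−1/3} h + n^{−1}(f^{−1/3})'') in the variable x̃ (assuming f > 0). -/
theorem stmt19 (n : ℝ) (hn : n ≠ 0)
    (I : Set ℝ) (hI : IsOpen I) (hIconv : Convex ℝ I) (x₀ : ℝ) (hx₀ : x₀ ∈ I)
    (f h : ℝ → ℝ) (hf : ContDiff ℝ (⊤ : ℕ∞) f) (hh : ContDiff ℝ (⊤ : ℕ∞) h)
    (hfpos : ∀ x, 0 < f x)
    (X : ℝ → ℝ) (hX : ∀ x, X x = ∫ y in x₀..x, f y ^ ((2 : ℝ) / 3))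
    (ht : ℝ → ℝ)
    (hht : ∀ x ∈ I, ht (X x) =
      (f x)⁻¹ * (f x ^ (-(1 : ℝ) / 3) * h x
        + n⁻¹ * deriv (deriv (fun y => f y ^ (-(1 : ℝ) / 3))) x))
    (u : ℝ → ℝ → ℝ) (hu : ContDiff ℝ (⊤ : ℕ∞) (Function.uncurry u))
    (hpde : ∀ t, ∀ x ∈ I, f x * deriv (fun s => u s x) t =
      deriv (fun y => Real.exp (n * u t y) * deriv (fun z => u t z) y) x
        + h x * Real.exp (n * u t x))
    (ut : ℝ → ℝ → ℝ)
    (hut : ∀ t, ∀ x ∈ I, ut t (X x) = u t x + 1 / (3 * n) * Real.log (f x)) :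
    ∀ t, ∀ x ∈ I, deriv (fun s => ut s (X x)) t =
      deriv (fun y => Real.exp (n * ut t y) * deriv (fun z => ut t z) y) (X x)
        + ht (X x) * Real.exp (n * ut t (X x)) := by
  intro t x hx
  have hf2 : ContDiff ℝ 2 f := hf.of_le (WithTop.coe_le_coe.2 le_top)
  have hfne : ∀ z, f z ≠ 0 := fun z => (hfpos z).ne'
  -- basic functions
  set U : ℝ → ℝ := fun z => u t z with hU_def
  have hU : ContDiff ℝ 2 U :=
    (hu.of_le (WithTop.coe_le_coe.2 le_top)).comp (ContDiff.prodMk (contDiff_const (c := t)) contDiff_id)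
  set ux : ℝ → ℝ := deriv U with hux_def
  have hux : ContDiff ℝ 1 ux := contDiff_deriv' hU
  set E : ℝ → ℝ := fun z => Real.exp (n * u t z) with hE_def
  have hE : ContDiff ℝ 2 E := Real.contDiff_exp.comp (contDiff_const.mul hU)
  set q : ℝ → ℝ := fun z => f z ^ (-(1 : ℝ) / 3) with hq_def
  have hq : ContDiff ℝ 2 q := contDiff_iff_contDiffAt.2 fun z =>
    (Real.contDiffAt_rpow_const_of_ne (hfne z)).comp z hf2.contDiffAt
  have hq' : ContDiff ℝ 1 (deriv q) := contDiff_deriv' hq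
  set φ : ℝ → ℝ := fun z => f z ^ ((2 : ℝ) / 3) with hφ_def
  have hφc : ContDiff ℝ 2 φ := contDiff_iff_contDiffAt.2 fun z =>
    (Real.contDiffAt_rpow_const_of_ne (hfne z)).comp z hf2.contDiffAt
  have hφpos : ∀ z, 0 < φ z := fun z => Real.rpow_pos_of_pos (hfpos z) _
  have hφne : ∀ z, φ z ≠ 0 := fun z => (hφpos z).ne'
  -- derivative of X
  have hXs : ∀ z, HasStrictDerivAt X (φ z) z := by
    intro z
    have hXeq : X = fun z' => ∫ y in x₀..z', φ y := funext hX
    rw [hXeq]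
    exact hφc.continuous.integral_hasStrictDerivAt x₀ z
  -- the local inverse g of X near x
  have hXF := (hXs x).hasStrictFDerivAt_equiv (hφne x)
  set g : ℝ → ℝ := hXF.localInverse X _ x with hg_def
  have hleft : ∀ᶠ z in 𝓝 x, g (X z) = z := hXF.eventually_left_inverse
  have hmap : Filter.map X (𝓝 x) = 𝓝 (X x) := hXF.map_nhds_eq_of_equiv
  have hgx : g (X x) = x := hXF.localInverse_apply_image
  have hgd : ∀ z, (∀ᶠ z' in 𝓝 z, g (X z') = z') → HasStrictDerivAt g (φ z)⁻¹ (X z) :=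
    fun z hz => (hXs z).to_local_left_inverse (hφne z) hz
  have hI_ev : ∀ᶠ z in 𝓝 x, z ∈ I := hI.eventually_mem hx
  have push : ∀ {P : ℝ → Prop}, (∀ᶠ z in 𝓝 x, P (X z)) → (∀ᶠ y in 𝓝 (X x), P y) := by
    intro P hP; rw [← hmap]; exact eventually_map.2 hP
  -- the transplanted solution w
  set c : ℝ → ℝ := fun z => 1 / (3 * n) * Real.log (f z) with hc_def
  set w : ℝ → ℝ := fun y => u t (g y) + c (g y) with hw_def
  set Ψ : ℝ → ℝ := fun z => (ux z + 1 / (3 * n) * (deriv f z / f z)) * (φ z)⁻¹ with hΨ_def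
  have hvd : ∀ z, HasDerivAt (fun z' => u t z' + c z')
      (ux z + 1 / (3 * n) * (deriv f z / f z)) z := by
    intro z
    exact ((hU.differentiable (by norm_num) z).hasDerivAt).add
      ((((hf2.differentiable (by norm_num) z).hasDerivAt).log (hfne z)).const_mul _)
  have hwd : ∀ᶠ z in 𝓝 x, z ∈ I ∧ g (X z) = z ∧ HasDerivAt w (Ψ z) (X z) := by
    filter_upwards [hI_ev, hleft, hleft.eventually_nhds] with z h1 h2 h3
    refine ⟨h1, h2, ?_⟩
    have hg' : HasDerivAt g (φ z)⁻¹ (X z) := (hgd z h3).hasDerivAt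
    have h4 : HasDerivAt (fun z' => u t z' + c z')
        (ux z + 1 / (3 * n) * (deriv f z / f z)) (g (X z)) := by
      rw [h2]; exact hvd z
    exact h4.comp (X z) hg'
  -- ut t agrees with w near X x
  have hw_eq : (fun y => ut t y) =ᶠ[𝓝 (X x)] w := by
    apply push
    filter_upwards [hI_ev, hleft] with z h1 h2
    show ut t (X z) = w (X z)
    simp only [hw_def, h2]
    exact hut t z h1
  -- global identity rewriting the flux in terms of q and deriv q
  set FX : ℝ → ℝ := fun y => Real.exp (n * u t y) * deriv (fun z => u t z) y with hFX_def
  set Φ : ℝ → ℝ := fun z => FX z * q z - 1 / n * (E z * deriv q z) with hΦ_def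
  have hexpz : ∀ z, Real.exp (n * (u t z + 1 / (3 * n) * Real.log (f z)))
      = E z * f z ^ ((1 : ℝ) / 3) := by
    intro z
    have h1 : n * (u t z + 1 / (3 * n) * Real.log (f z))
        = n * u t z + Real.log (f z) * (1 / 3) := by field_simp
    rw [h1, Real.exp_add, hE_def]
    congr 1
    exact (Real.rpow_def_of_pos (hfpos z) _).symm
  have hqd : ∀ z, deriv q z = (-(1 : ℝ) / 3 * f z ^ (-(1 : ℝ) / 3 - 1)) * deriv f z := by
    intro z
    have h1 : HasDerivAt (fun y : ℝ => y ^ (-(1 : ℝ) / 3))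
        (-(1 : ℝ) / 3 * f z ^ (-(1 : ℝ) / 3 - 1)) (f z) :=
      Real.hasDerivAt_rpow_const (Or.inl (hfne z))
    have h2 : HasDerivAt q ((-(1 : ℝ) / 3 * f z ^ (-(1 : ℝ) / 3 - 1)) * deriv f z) z :=
      h1.comp z (hf2.differentiable (by norm_num) z).hasDerivAt
    exact h2.deriv
  have hΦid : ∀ z, Real.exp (n * (u t z + c z)) * Ψ z = Φ z := by
    intro z
    have hb := hfpos z
    have Q1 : f z ^ ((1 : ℝ) / 3) * (f z ^ ((2 : ℝ) / 3))⁻¹ = f z ^ (-(1 : ℝ) / 3) := by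
      rw [← Real.rpow_neg hb.le, ← Real.rpow_add hb]; norm_num
    have Q2 : (f z)⁻¹ * f z ^ (-(1 : ℝ) / 3) = f z ^ (-(1 : ℝ) / 3 - 1) := by
      rw [← Real.rpow_neg_one (f z), ← Real.rpow_add hb]; ring_nf
    have hFXz : FX z = E z * ux z := rfl
    simp only [hΦ_def, hΨ_def, hc_def, hφ_def]
    rw [hexpz z, hqd z, hFXz]
    linear_combination (E z * ux z + E z * (1 / (3 * n)) * deriv f z * (f z)⁻¹) * Q1
      + (E z * (1 / (3 * n)) * deriv f z) * Q2
  -- the eventual equality of the flux functions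
  have hFΦ : (fun y => Real.exp (n * ut t y) * deriv (fun z => ut t z) y)
      =ᶠ[𝓝 (X x)] (Φ ∘ g) := by
    have hder : deriv (fun y => ut t y) =ᶠ[𝓝 (X x)] deriv w := hw_eq.deriv
    have hder' : ∀ᶠ z in 𝓝 x, deriv (fun y => ut t y) (X z) = deriv w (X z) := by
      rw [← hmap] at hder; exact eventually_map.1 hder
    have hw_eq' : ∀ᶠ z in 𝓝 x, ut t (X z) = w (X z) := by
      rw [← hmap] at hw_eq; exact eventually_map.1 hw_eq
    apply push
    filter_upwards [hwd, hder', hw_eq'] with z hz h2 h3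
    show Real.exp (n * ut t (X z)) * deriv (fun y => ut t y) (X z) = Φ (g (X z))
    rw [h2, h3, hz.2.2.deriv, hz.2.1]
    simp only [hw_def, hz.2.1]
    exact hΦid z
  -- derivative of Φ at x
  have hEd : HasDerivAt E (Real.exp (n * u t x) * (n * ux x)) x := by
    have h1 : HasDerivAt (fun z => n * u t z) (n * ux x) x :=
      ((hU.differentiable (by norm_num) x).hasDerivAt).const_mul n
    exact h1.exp
  have hFXc : ContDiff ℝ 1 FX := (hE.of_le (by norm_num)).mul hux
  have hFXd : HasDerivAt FX (deriv FX x) x := (hFXc.differentiable one_ne_zero x).hasDerivAt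
  have hqdx : HasDerivAt q (deriv q x) x := (hq.differentiable (by norm_num) x).hasDerivAt
  have hq'dx : HasDerivAt (deriv q) (deriv (deriv q) x) x :=
    (hq'.differentiable one_ne_zero x).hasDerivAt
  have hΦd : HasDerivAt Φ (deriv FX x * q x - 1 / n * (E x * deriv (deriv q) x)) x := by
    have h1 := (hFXd.mul hqdx).sub ((hEd.mul hq'dx).const_mul (1 / n))
    refine h1.congr_deriv ?_
    have hFXx : FX x = E x * ux x := rfl
    have hEx : Real.exp (n * u t x) = E x := rfl
    rw [hFXx, hEx]
    field_simp
    ring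
  have hgdx : HasDerivAt g (φ x)⁻¹ (X x) := (hgd x hleft).hasDerivAt
  have hΦgx : HasDerivAt Φ (deriv FX x * q x - 1 / n * (E x * deriv (deriv q) x)) (g (X x)) := by
    rw [hgx]; exact hΦd
  have hcomp : HasDerivAt (Φ ∘ g)
      ((deriv FX x * q x - 1 / n * (E x * deriv (deriv q) x)) * (φ x)⁻¹) (X x) :=
    hΦgx.comp (X x) hgdx
  have hderiv : deriv (fun y => Real.exp (n * ut t y) * deriv (fun z => ut t z) y) (X x)
      = (deriv FX x * q x - 1 / n * (E x * deriv (deriv q) x)) * (φ x)⁻¹ :=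
    hFΦ.deriv_eq.trans hcomp.deriv
  -- time derivative
  have hT : deriv (fun s => ut s (X x)) t = deriv (fun s => u s x) t := by
    have hfun : (fun s => ut s (X x)) = fun s => u s x + 1 / (3 * n) * Real.log (f x) :=
      funext fun s => hut s x hx
    rw [hfun, deriv_add_const]
  have hpde' := hpde t x hx
  have hT2 : deriv (fun s => u s x) t
      = (f x)⁻¹ * (deriv FX x + h x * Real.exp (n * u t x)) := by
    rw [← hpde', inv_mul_cancel_left₀ (hfne x)]
  have hexpux : Real.exp (n * ut t (X x)) = E x * f x ^ ((1 : ℝ) / 3) := by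
    rw [hut t x hx]; exact hexpz x
  -- final assembly
  rw [hT, hT2, hderiv, hht x hx, hexpux]
  have hEx : Real.exp (n * u t x) = E x := rfl
  have hqx : q x = f x ^ (-(1 : ℝ) / 3) := rfl
  have hφx : φ x = f x ^ ((2 : ℝ) / 3) := rfl
  rw [hEx, hqx, hφx]
  have hb := hfpos x
  have P1 : f x ^ (-(1 : ℝ) / 3) * (f x ^ ((2 : ℝ) / 3))⁻¹ = (f x)⁻¹ := by
    rw [← Real.rpow_neg hb.le, ← Real.rpow_add hb]
    norm_num [Real.rpow_neg_one]
  have P2 : f x ^ (-(1 : ℝ) / 3) * f x ^ ((1 : ℝ) / 3) = 1 := by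
    rw [← Real.rpow_add hb]; norm_num
  have P3 : (f x)⁻¹ * f x ^ ((1 : ℝ) / 3) = (f x ^ ((2 : ℝ) / 3))⁻¹ := by
    rw [← Real.rpow_neg_one (f x), ← Real.rpow_add hb, ← Real.rpow_neg hb.le]
    norm_num
  linear_combination (-(deriv FX x)) * P1 - (f x)⁻¹ * h x * E x * P2
    - n⁻¹ * E x * (deriv (deriv q) x) * P3
end
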